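/- arXiv:1206.6642 — 2 statements merged into one kernel-verified Lean document; each statement's English description precedes it below -/
import Mathlib

section
/- Let m be a prime and k a positive integer. Then, in the ring ℤ[[q]] of formal power series, ( (∏_{j≥1}(1 − q^j))^m · (∏_{j≥1}(1 − q^{mj}))^{−1} )^{m^{k−1}} ≡ 1 (mod m^k), i.e., every coefficient of positive degree of this power series is divisible by m^k and its constant term is congruent to 1 modulo m^k. -/
open PowerSeries

/-!
Reducing modulo the prime `m`, Frobenius turns `(1 - q^j)^m` into `1 - q^(mj)`, so
`eulerProd 1 ^ m ≡ eulerProd m` and the eta quotient `f = eulerProd 1 ^ m / eulerProd m` satisfies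
`f ≡ 1 (mod m)`; raising to the power `m^(k-1)` then gives `f^(m^(k-1)) ≡ 1 (mod m^k)`
(`dvd_sub_pow_of_dvd_sub`). Since `eulerProd` is defined coefficientwise, the Frobenius identity
is checked on the finite partial products, which agree with `eulerProd` modulo `X ^ n`.
-/

/-- `eulerProd d` is the formal power series `∏_{j ≥ 1} (1 - q^(d*j))` over `ℤ`:
its `n`-th coefficient agrees with that of any sufficiently long finite partial product. -/
noncomputable def eulerProd (d : ℕ) : PowerSeries ℤ :=
  PowerSeries.mk fun n =>
    PowerSeries.coeff (R := ℤ) n (∏ j ∈ Finset.range (n + 1), (1 - (PowerSeries.X : PowerSeries ℤ) ^ (d * (j + 1))))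

namespace PowerSeries

variable {R : Type*} [CommRing R]

variable (R) in
noncomputable def eulerPartialProd (d N : ℕ) : R⟦X⟧ :=
  ∏ j ∈ Finset.range N, (1 - X ^ (d * (j + 1)))

theorem map_eulerPartialProd {S : Type*} [CommRing S] (f : R →+* S) (d N : ℕ) :
    map f (eulerPartialProd R d N) = eulerPartialProd S d N := by
  simp only [eulerPartialProd, map_prod, map_sub, map_one, map_pow, map_X]

theorem eulerPartialProd_pow_expChar (p : ℕ) [ExpChar R p] (d N : ℕ) :
    eulerPartialProd R d N ^ p = eulerPartialProd R (p * d) N := by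
  have : ExpChar R⟦X⟧ p := expChar_of_injective_ringHom C_injective p
  simp only [eulerPartialProd, ← Finset.prod_pow, sub_pow_expChar, one_pow, ← pow_mul,
    mul_assoc, mul_comm _ p]

theorem X_pow_dvd_eulerPartialProd_sub {d M N : ℕ} (hd : 0 < d) (hMN : M ≤ N) :
    (X : R⟦X⟧) ^ M ∣ eulerPartialProd R d N - eulerPartialProd R d M := by
  induction N, hMN using Nat.le_induction with
  | base => simp
  | succ N hMN ih =>
    have hX : (X : R⟦X⟧) ^ M ∣ X ^ (d * (N + 1)) :=
      pow_dvd_pow X (hMN.trans (N.le_succ.trans (Nat.le_mul_of_pos_left _ hd)))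
    have : eulerPartialProd R d (N + 1) - eulerPartialProd R d M =
        (eulerPartialProd R d N - eulerPartialProd R d M) -
          eulerPartialProd R d N * X ^ (d * (N + 1)) := by
      rw [eulerPartialProd, Finset.prod_range_succ, ← eulerPartialProd]
      ring
    rw [this]
    exact dvd_sub ih (dvd_mul_of_dvd_right hX _)

theorem coeff_eq_of_X_pow_dvd_sub {n : ℕ} {f g : R⟦X⟧} (h : X ^ (n + 1) ∣ f - g) :
    coeff n f = coeff n g := by
  rw [← sub_eq_zero, ← map_sub]
  exact X_pow_dvd_iff.mp h n n.lt_succ_self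

theorem X_pow_dvd_eulerProd_sub {d : ℕ} (hd : 0 < d) (n : ℕ) :
    X ^ n ∣ eulerProd d - eulerPartialProd ℤ d n := by
  refine X_pow_dvd_iff.mpr fun i hi => ?_
  rw [map_sub, sub_eq_zero, eulerProd, coeff_mk]
  exact (coeff_eq_of_X_pow_dvd_sub (X_pow_dvd_eulerPartialProd_sub hd hi)).symm

variable (R) in
theorem map_eulerProd_pow_expChar (p : ℕ) [ExpChar R p] {d : ℕ} (hd : 0 < d) :
    map (Int.castRingHom R) (eulerProd d) ^ p = map (Int.castRingHom R) (eulerProd (p * d)) := by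
  have hp : 0 < p := expChar_pos R p
  ext n
  apply coeff_eq_of_X_pow_dvd_sub
  have trunc (e : ℕ) (he : 0 < e) :
      X ^ (n + 1) ∣ map (Int.castRingHom R) (eulerProd e) - eulerPartialProd R e (n + 1) := by
    simpa only [map_sub, map_pow, map_X, map_eulerPartialProd] using
      map_dvd (map (Int.castRingHom R)) (X_pow_dvd_eulerProd_sub he (n + 1))
  have h := dvd_sub ((trunc d hd).trans (sub_dvd_pow_sub_pow _ _ p))
    (trunc (p * d) (Nat.mul_pos hp hd))
  rwa [eulerPartialProd_pow_expChar, sub_sub_sub_cancel_right] at h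

theorem natCast_dvd_of_map_eq_zero {n : ℕ} {f : ℤ⟦X⟧}
    (h : map (Int.castRingHom (ZMod n)) f = 0) :
    (n : ℤ⟦X⟧) ∣ f := by
  have hdvd (i : ℕ) : (n : ℤ) ∣ coeff i f := by
    rw [← ZMod.intCast_zmod_eq_zero_iff_dvd]
    simpa using congrArg (coeff i) h
  refine ⟨mk fun i => coeff i f / n, ?_⟩
  ext i
  rw [← map_natCast C, coeff_C_mul, coeff_mk, Int.mul_ediv_cancel' (hdvd i)]

theorem natCast_dvd_coeff_of_dvd {a : ℕ} {f : R⟦X⟧} (h : (a : R⟦X⟧) ∣ f) (n : ℕ) :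
    (a : R) ∣ coeff n f := by
  obtain ⟨g, rfl⟩ := h
  rw [← map_natCast C, coeff_C_mul]
  exact dvd_mul_right _ _

end PowerSeries

theorem eta_quotient_congruent_one (m k : ℕ) (hm : m.Prime) (hk : 0 < k)
    (u : (PowerSeries ℤ)ˣ) (hu : (u : PowerSeries ℤ) = eulerProd m) :
    ∀ n : ℕ, (m : ℤ) ^ k ∣
      PowerSeries.coeff (R := ℤ) n ((eulerProd 1 ^ m * (↑u⁻¹ : PowerSeries ℤ)) ^ m ^ (k - 1) - 1) := by
  have : Fact m.Prime := ⟨hm⟩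
  have hfrob : map (Int.castRingHom (ZMod m)) (eulerProd 1 ^ m * ↑u⁻¹ - 1) = 0 := by
    rw [map_sub, map_mul, map_pow, map_eulerProd_pow_expChar (ZMod m) m one_pos, mul_one, ← hu,
      ← map_mul, Units.mul_inv, map_one, sub_self]
  have hpow := dvd_sub_pow_of_dvd_sub (natCast_dvd_of_map_eq_zero hfrob) (k - 1)
  rw [one_pow, Nat.sub_add_cancel hk, ← Nat.cast_pow] at hpow
  intro n
  exact_mod_cast natCast_dvd_coeff_of_dvd hpow n
end

section
/- As formal power series over ℤ, (Σ_{n≥0} p_5(5n) q^n) · ∏_{j≥1}(1 − q^j) ≡ (1 + 240·Σ_{n≥1} σ_3(n) q^n)² (mod 5), i.e., every coefficient of the difference of the two sides is divisible by 5, where σ_3(n) = Σ_{d | n} d³. -/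
open PowerSeries

/-- `multipartition r n` is the number of `r`-component multipartitions of `n`,
i.e. the number of `r`-tuples of integer partitions whose sizes sum to `n`. -/
def multipartition (r n : ℕ) : ℕ :=
  ∑ c ∈ Finset.Nat.antidiagonalTuple r n, ∏ i, Fintype.card (Nat.Partition (c i))

/-- The `q`-expansion of the Eisenstein series `E₄`, namely `1 + 240 ∑_{n ≥ 1} σ₃(n) qⁿ`. -/
noncomputable def E4 : PowerSeries ℤ :=
  PowerSeries.mk fun n => if n = 0 then 1 else 240 * ∑ d ∈ n.divisors, (d : ℤ) ^ 3

/-!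
Over `ZMod 5` the multipartition series `∑ p₅(n) qⁿ = (∑ p(n) qⁿ)⁵` is a fifth power, and Frobenius
shows that the coefficient of `q^(5n)` in `f⁵` is the coefficient of `qⁿ` in `f`. Hence
`∑ p₅(5n) qⁿ ≡ ∑ p(n) qⁿ (mod 5)`, whose product with Euler's `∏ (1 - qʲ)` is `1`. On the other side
`E₄ ≡ 1 (mod 5)` because `5 ∣ 240`.
-/

open Finset
open scoped PowerSeries.WithPiTopology

theorem coeff_pow_eq_sum_antidiagonalTuple {R : Type*} [CommSemiring R] (f : R⟦X⟧) (r n : ℕ) :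
    coeff n (f ^ r) = ∑ c ∈ Nat.antidiagonalTuple r n, ∏ i, coeff (c i) f := by
  classical
  have := coeff_prod (fun _ : Fin r => f) n univ
  rw [prod_const, card_univ, Fintype.card_fin] at this
  rw [this, finsuppAntidiag, sum_map, ← piAntidiag_univ_fin_eq_antidiagonalTuple,
    ← sum_attach (piAntidiag univ n)]
  rfl

noncomputable def partitionSeries (R : Type*) [CommSemiring R] : R⟦X⟧ :=
  PowerSeries.mk fun n => (Fintype.card n.Partition : R)

theorem map_partitionSeries {R S : Type*} [CommSemiring R] [CommSemiring S] (f : R →+* S) :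
    map f (partitionSeries R) = partitionSeries S := by
  ext n
  simp [partitionSeries]

theorem mk_multipartition_eq_pow (R : Type*) [CommSemiring R] (r : ℕ) :
    (PowerSeries.mk fun n => (multipartition r n : R)) = partitionSeries R ^ r := by
  ext n
  simp [coeff_pow_eq_sum_antidiagonalTuple, multipartition, partitionSeries]

theorem hasProd_partitionSeries (R : Type*) [CommSemiring R] [TopologicalSpace R] [T2Space R]
    [IsTopologicalSemiring R] :
    HasProd (fun i => ∑' j : ℕ, (X : R⟦X⟧) ^ ((i + 1) * j)) (partitionSeries R) := by
  convert Nat.Partition.hasProd_powerSeriesMk_card_restricted R (fun _ => True) using 1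
  · simp
  · ext n
    simp [partitionSeries, Nat.Partition.restricted]

theorem coeff_prod_eq_of_subset {R ι : Type*} [CommRing R] [DecidableEq ι] {f : ι → R⟦X⟧}
    {s t : Finset ι} {n : ℕ} (hts : t ⊆ s) (hf : ∀ i ∈ s \ t, X ^ (n + 1) ∣ f i - 1) :
    coeff n (∏ i ∈ s, f i) = coeff n (∏ i ∈ t, f i) := by
  set I := Ideal.span {(X : R⟦X⟧) ^ (n + 1)}
  have hmk : Ideal.Quotient.mk I (∏ i ∈ s, f i) = Ideal.Quotient.mk I (∏ i ∈ t, f i) := by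
    rw [← prod_sdiff hts, map_mul, map_prod, prod_eq_one, one_mul]
    intro i hi
    rw [← map_one (Ideal.Quotient.mk I), Ideal.Quotient.eq]
    exact Ideal.mem_span_singleton.mpr (hf i hi)
  rw [Ideal.Quotient.eq, Ideal.mem_span_singleton, X_pow_dvd_iff] at hmk
  exact sub_eq_zero.mp (by simpa using hmk n n.lt_succ_self)

theorem hasProd_eulerProd {d : ℕ} (hd : 0 < d) :
    HasProd (fun i => 1 - (X : ℤ⟦X⟧) ^ (d * (i + 1))) (eulerProd d) := by
  rw [HasProd, WithPiTopology.tendsto_iff_coeff_tendsto]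
  refine fun n => tendsto_atTop_of_eventually_const (i₀ := range (n + 1)) fun s hs => ?_
  rw [eulerProd, coeff_mk]
  refine coeff_prod_eq_of_subset hs fun i hi => ?_
  have hi : n + 1 ≤ d * (i + 1) := by
    have := (mem_sdiff.mp hi).2
    rw [mem_range] at this
    nlinarith
  rw [sub_sub_cancel_left, dvd_neg]
  exact pow_dvd_pow X hi

theorem partitionSeries_mul_eulerProd_one : partitionSeries ℤ * eulerProd 1 = 1 := by
  have hprod := (hasProd_partitionSeries ℤ).mul (hasProd_eulerProd one_pos)
  have hfactor : ∀ i : ℕ, (∑' j : ℕ, (X : ℤ⟦X⟧) ^ ((i + 1) * j)) * (1 - X ^ (1 * (i + 1))) = 1 :=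
    fun i => by
      simp_rw [one_mul, pow_mul]
      exact WithPiTopology.tsum_pow_mul_one_sub_of_constantCoeff_eq_zero (by simp)
  simp only [hfactor] at hprod
  exact hprod.unique hasProd_one

theorem coeff_prime_mul_pow_prime {p : ℕ} [Fact p.Prime] (f : (ZMod p)⟦X⟧) (j : ℕ) :
    coeff (p * j) (f ^ p) = coeff j f := by
  have hp := (Fact.out : p.Prime).pos
  have htrunc : ∀ φ : (ZMod p)⟦X⟧, coeff (p * j) φ = (trunc (p * j + 1) φ).coeff (p * j) := by
    simp [coeff_trunc]
  have hj : j < p * j + 1 := Nat.lt_succ_of_le (Nat.le_mul_of_pos_left j hp)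
  rw [htrunc, ← trunc_trunc_pow, ← htrunc, ← Polynomial.coe_pow, Polynomial.coeff_coe,
    ← ZMod.expand_card, Polynomial.coeff_expand hp, if_pos (dvd_mul_right p j),
    Nat.mul_div_cancel_left j hp, coeff_trunc, if_pos hj]

theorem map_mk_multipartition_prime_mul (p : ℕ) [Fact p.Prime] :
    map (Int.castRingHom (ZMod p)) (PowerSeries.mk fun j => (multipartition p (p * j) : ℤ)) =
      partitionSeries (ZMod p) := by
  ext j
  have := congr_arg (coeff (p * j)) (mk_multipartition_eq_pow (ZMod p) p)
  rw [coeff_mk, coeff_prime_mul_pow_prime] at this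
  simp [this]

theorem map_E4_eq_one {p : ℕ} (hp : p ∣ 240) : map (Int.castRingHom (ZMod p)) E4 = 1 := by
  ext n
  have h240 : (240 : ZMod p) = 0 := by exact_mod_cast (ZMod.natCast_eq_zero_iff 240 p).mpr hp
  by_cases hn : n = 0 <;> simp [E4, hn, h240]

theorem multipartition_five_five_gf (n : ℕ) :
    (5 : ℤ) ∣ PowerSeries.coeff (R := ℤ) n
      ((PowerSeries.mk fun j => (multipartition 5 (5 * j) : ℤ)) * eulerProd 1 - E4 ^ 2) := by
  have : Fact (Nat.Prime 5) := ⟨by norm_num⟩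
  have hmap : map (Int.castRingHom (ZMod 5))
      ((PowerSeries.mk fun j => (multipartition 5 (5 * j) : ℤ)) * eulerProd 1 - E4 ^ 2) = 0 := by
    rw [map_sub, map_mul, map_mk_multipartition_prime_mul,
      ← map_partitionSeries (Int.castRingHom (ZMod 5)), ← map_mul, partitionSeries_mul_eulerProd_one, map_pow, map_E4_eq_one (by norm_num)]
    simp
  have := congr_arg (coeff n) hmap
  rw [coeff_map, map_zero] at this
  exact_mod_cast (ZMod.intCast_zmod_eq_zero_iff_dvd _ 5).mp this
end
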